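/- With κ in the open first quadrant and (n²-κ²)^{1/2} = a_n - i b_n (a_n, b_n > 0) the principal root, the Fourier multiplier Λ_κ⁻¹ g = ∑_n (n²-κ²)^{1/2} ĝ(n) e^{int} satisfies: there is c > 0 with Re⟨Λ_κ⁻¹ g, ḡ⟩ ≥ c‖g‖²_{H^{1/2}} and -Im⟨Λ_κ⁻¹ g, ḡ⟩ ≥ c‖g‖²_{H^{-1/2}} for all g in H^{1/2}. -/

import Mathlib

/-!
Write `√(n² - κ²) = a_n - i b_n`, `κ = x + i y`. Squaring gives `a_n² - b_n² = n² - x² + y²` and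
`a_n b_n = x y`, while `a_n² + b_n² = |n² - κ²| ≤ n² + x² + y²`. Hence `b_n ≤ x` and
`a_n² ≤ n² + y²`, so `a_n = x y / b_n ≥ y`, `a_n ≳ |n|` and `b_n = x y / a_n ≳ (1 + |n|)⁻¹`.
Since `⟨Λ_κ⁻¹ g, ḡ⟩ = ∑ (a_n - i b_n) |ĝ(n)|²`, these multiplier bounds are the two estimates.
-/

open Complex

noncomputable def rootK (κ : ℂ) (n : ℤ) : ℂ := ((n : ℂ) ^ 2 - κ ^ 2) ^ ((1 : ℂ) / 2)

/-- The Fourier multiplier Λ_κ⁻¹ : (Λ_κ⁻¹ g)^(n) = (n² - κ²)^{1/2} ĝ(n). -/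
noncomputable def LamKappaInv (κ : ℂ) (g : ℤ → ℂ) : ℤ → ℂ := fun n => rootK κ n * g n

noncomputable def pairS (f g : ℤ → ℂ) : ℂ := ∑' n : ℤ, f n * g (-n)

noncomputable def conjS (φ : ℤ → ℂ) : ℤ → ℂ := fun n => (starRingEnd ℂ) (φ (-n))

noncomputable def sobWt (s : ℝ) (n : ℤ) : ℝ := if n = 0 then 1 else |(n : ℝ)| ^ (2 * s)

noncomputable def sobNormSq (s : ℝ) (φ : ℤ → ℂ) : ℝ :=
  ∑' n : ℤ, sobWt s n * ‖φ n‖ ^ 2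

section SobolevWeight

lemma sobWt_nonneg (s : ℝ) (n : ℤ) : 0 ≤ sobWt s n := by
  unfold sobWt; split_ifs <;> positivity

lemma sobWt_half_of_ne_zero {n : ℤ} (hn : n ≠ 0) : sobWt (1 / 2) n = |(n : ℝ)| := by
  norm_num [sobWt, hn]

lemma sobWt_half_le_one_add_abs (n : ℤ) : sobWt (1 / 2) n ≤ 1 + |(n : ℝ)| := by
  by_cases hn : n = 0
  · simp [sobWt, hn]
  · rw [sobWt_half_of_ne_zero hn]; linarith

lemma one_add_abs_le_two_mul_sobWt_half (n : ℤ) : 1 + |(n : ℝ)| ≤ 2 * sobWt (1 / 2) n := by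
  by_cases hn : n = 0
  · simp [sobWt, hn]
  · have : (1 : ℝ) ≤ |(n : ℝ)| := by exact_mod_cast Int.one_le_abs hn
    rw [sobWt_half_of_ne_zero hn]; linarith

lemma sobWt_half_pos (n : ℤ) : 0 < sobWt (1 / 2) n := by
  linarith [one_add_abs_le_two_mul_sobWt_half n, abs_nonneg (n : ℝ)]

lemma sobWt_neg_half (n : ℤ) : sobWt (-(1 / 2)) n = (sobWt (1 / 2) n)⁻¹ := by
  by_cases hn : n = 0
  · simp [sobWt, hn]
  · rw [sobWt_half_of_ne_zero hn]
    norm_num [sobWt, hn, Real.rpow_neg_one]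

end SobolevWeight

section Multiplier

variable (κ : ℂ) (n : ℤ)

lemma rootK_sq : rootK κ n ^ 2 = (n : ℂ) ^ 2 - κ ^ 2 := by
  rw [rootK, one_div]; exact cpow_ofNat_inv_pow _ 2

lemma rootK_re_nonneg : 0 ≤ (rootK κ n).re := by
  rw [rootK, one_div, cpow_inv_two_re]; positivity

lemma rootK_re_sq_sub_im_sq :
    (rootK κ n).re ^ 2 - (rootK κ n).im ^ 2 = (n : ℝ) ^ 2 - κ.re ^ 2 + κ.im ^ 2 := by
  have h := congrArg re (rootK_sq κ n)
  simp only [sq, mul_re, sub_re, intCast_re, intCast_im] at h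
  linear_combination h

lemma rootK_re_mul_im : (rootK κ n).re * (rootK κ n).im = -(κ.re * κ.im) := by
  have h := congrArg im (rootK_sq κ n)
  simp only [sq, mul_im, sub_im, intCast_re, intCast_im] at h
  linear_combination h / 2

lemma rootK_re_sq_add_im_sq_le :
    (rootK κ n).re ^ 2 + (rootK κ n).im ^ 2 ≤ (n : ℝ) ^ 2 + ‖κ‖ ^ 2 := by
  calc _ = ‖rootK κ n‖ ^ 2 := by rw [Complex.sq_norm, normSq_apply]; ring
    _ = ‖(n : ℂ) ^ 2 - κ ^ 2‖ := by rw [← norm_pow, rootK_sq]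
    _ ≤ ‖(n : ℂ) ^ 2‖ + ‖κ ^ 2‖ := norm_sub_le _ _
    _ = (n : ℝ) ^ 2 + ‖κ‖ ^ 2 := by simp [norm_pow, sq_abs]

lemma norm_rootK_le : ‖rootK κ n‖ ≤ |(n : ℝ)| + ‖κ‖ := by
  have h := rootK_re_sq_add_im_sq_le κ n
  rw [← sq_abs (n : ℝ)] at h
  refine (pow_le_pow_iff_left₀ (norm_nonneg _) (by positivity) two_ne_zero).1 ?_
  rw [Complex.sq_norm, normSq_apply]
  nlinarith [norm_nonneg κ, abs_nonneg (n : ℝ)]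

lemma rootK_re_le : (rootK κ n).re ≤ |(n : ℝ)| + |κ.im| := by
  have h := rootK_re_sq_add_im_sq_le κ n
  have := rootK_re_sq_sub_im_sq κ n
  rw [Complex.sq_norm, normSq_apply] at h
  nlinarith [rootK_re_nonneg κ n, abs_nonneg (n : ℝ), abs_nonneg κ.im, sq_abs (n : ℝ),
    sq_abs κ.im]

variable {κ}

lemma neg_rootK_im_le_re (hx : 0 < κ.re) : -(rootK κ n).im ≤ κ.re := by
  have h := rootK_re_sq_add_im_sq_le κ n
  have := rootK_re_sq_sub_im_sq κ n
  rw [Complex.sq_norm, normSq_apply] at h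
  nlinarith

lemma im_le_rootK_re (hx : 0 < κ.re) : κ.im ≤ (rootK κ n).re := by
  have hb := neg_rootK_im_le_re n hx
  have := rootK_re_mul_im κ n
  nlinarith [rootK_re_nonneg κ n]

lemma abs_mul_im_le_rootK_re_mul_norm (hx : 0 < κ.re) (hy : 0 < κ.im) :
    |(n : ℝ)| * κ.im ≤ (rootK κ n).re * ‖κ‖ := by
  have ha := im_le_rootK_re n hx
  have := rootK_re_sq_sub_im_sq κ n
  have hκ : ‖κ‖ ^ 2 = κ.re ^ 2 + κ.im ^ 2 := by rw [Complex.sq_norm, normSq_apply]; ring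
  have : (|(n : ℝ)| * κ.im) ^ 2 ≤ ((rootK κ n).re * ‖κ‖) ^ 2 := by
    rw [mul_pow, mul_pow, hκ, sq_abs]
    have hsq : κ.im ^ 2 ≤ (rootK κ n).re ^ 2 := pow_le_pow_left₀ hy.le ha 2
    nlinarith [mul_le_mul_of_nonneg_left hsq (sq_nonneg κ.re), sq_nonneg (rootK κ n).im,
      sq_nonneg κ.im]
  exact (pow_le_pow_iff_left₀ (by positivity)
    (mul_nonneg (rootK_re_nonneg κ n) (norm_nonneg κ)) two_ne_zero).1 this

lemma mul_sobWt_half_le_rootK_re (hx : 0 < κ.re) (hy : 0 < κ.im) :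
    κ.im / (1 + ‖κ‖) * sobWt (1 / 2) n ≤ (rootK κ n).re := by
  have := im_le_rootK_re n hx
  have := abs_mul_im_le_rootK_re_mul_norm n hx hy
  rw [div_mul_eq_mul_div, div_le_iff₀ (by positivity)]
  nlinarith [sobWt_half_le_one_add_abs n]

lemma mul_sobWt_neg_half_le_neg_rootK_im (hx : 0 < κ.re) (hy : 0 < κ.im) :
    κ.re * κ.im / (2 * (1 + κ.im)) * sobWt (-(1 / 2)) n ≤ -(rootK κ n).im := by
  have hb : 0 < -(rootK κ n).im := by
    refine pos_of_mul_pos_right ?_ (rootK_re_nonneg κ n)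
    rw [mul_neg, rootK_re_mul_im, neg_neg]; exact mul_pos hx hy
  have ha := rootK_re_le κ n
  rw [abs_of_pos hy] at ha
  have hxy : κ.re * κ.im ≤ (|(n : ℝ)| + κ.im) * -(rootK κ n).im := by
    rw [← neg_neg (κ.re * κ.im), ← rootK_re_mul_im, ← mul_neg]
    exact mul_le_mul_of_nonneg_right ha hb.le
  have hw : |(n : ℝ)| + κ.im ≤ 2 * (1 + κ.im) * sobWt (1 / 2) n := by
    nlinarith [one_add_abs_le_two_mul_sobWt_half n, abs_nonneg (n : ℝ)]
  have := sobWt_half_pos n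
  rw [sobWt_neg_half, ← div_eq_mul_inv, div_div, div_le_iff₀ (by positivity)]
  nlinarith [mul_le_mul_of_nonneg_left hw hb.le]

lemma norm_rootK_le_sobWt : ‖rootK κ n‖ ≤ 2 * (1 + ‖κ‖) * sobWt (1 / 2) n := by
  have := one_add_abs_le_two_mul_sobWt_half n
  nlinarith [norm_rootK_le κ n, norm_nonneg κ, abs_nonneg (n : ℝ)]

end Multiplier

section Pairing

lemma pairS_mul_conjS (m g : ℤ → ℂ) :
    pairS (fun n => m n * g n) (conjS g) = ∑' n, ‖g n‖ ^ 2 • m n := by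
  refine tsum_congr fun n => ?_
  rw [conjS, neg_neg, mul_assoc, mul_conj, normSq_eq_norm_sq, real_smul, mul_comm]

lemma mul_tsum_le_tsum_of_mul_le {ι : Type*} {c : ℝ} {f g : ι → ℝ} (hc : 0 ≤ c)
    (hf : ∀ i, 0 ≤ f i) (hfg : ∀ i, c * f i ≤ g i) (hg : Summable g) :
    c * ∑' i, f i ≤ ∑' i, g i := by
  rw [← tsum_mul_left]
  exact (hg.of_nonneg_of_le (fun i => mul_nonneg hc (hf i)) hfg).tsum_le_tsum hfg hg

lemma summable_sq_norm_smul {ι : Type*} {m g : ι → ℂ} {w : ι → ℝ} {C : ℝ}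
    (hm : ∀ i, ‖m i‖ ≤ C * w i) (hg : Summable fun i => w i * ‖g i‖ ^ 2) :
    Summable fun i => ‖g i‖ ^ 2 • m i := by
  refine (hg.mul_left C).of_norm_bounded fun i => ?_
  rw [norm_smul, norm_pow, norm_norm, ← mul_assoc, mul_comm]
  exact mul_le_mul_of_nonneg_right (hm i) (by positivity)

lemma mul_tsum_le_map_pairS (L : ℂ →L[ℝ] ℝ) {m g : ℤ → ℂ} {w : ℤ → ℝ} {c : ℝ} (hc : 0 ≤ c)
    (hw : ∀ n, 0 ≤ w n) (hle : ∀ n, c * w n ≤ L (m n))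
    (hsum : Summable fun n => ‖g n‖ ^ 2 • m n) :
    c * ∑' n, w n * ‖g n‖ ^ 2 ≤ L (pairS (fun n => m n * g n) (conjS g)) := by
  rw [pairS_mul_conjS, L.map_tsum hsum]
  simp_rw [map_smul, smul_eq_mul]
  refine mul_tsum_le_tsum_of_mul_le hc (fun n => mul_nonneg (hw n) (sq_nonneg _))
    (fun n => ?_) (hsum.mapL L |>.congr fun n => by rw [map_smul, smul_eq_mul])
  nlinarith [hle n, sq_nonneg ‖g n‖]

end Pairing

/-- Coercivity of Λ_κ⁻¹ : there is c > 0 with Re⟨Λ_κ⁻¹ g, ḡ⟩ ≥ c ‖g‖²_{H^{1/2}}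
and -Im⟨Λ_κ⁻¹ g, ḡ⟩ ≥ c ‖g‖²_{H^{-1/2}} for all g ∈ H^{1/2}. -/
theorem stmt13 (κ : ℂ) (h1 : 0 < κ.re) (h2 : 0 < κ.im) :
    ∃ c : ℝ, 0 < c ∧ ∀ g : ℤ → ℂ,
      (Summable fun n : ℤ => sobWt (1 / 2) n * ‖g n‖ ^ 2) →
      c * sobNormSq (1 / 2) g ≤ (pairS (LamKappaInv κ g) (conjS g)).re ∧
      c * sobNormSq (-(1 / 2)) g ≤ -(pairS (LamKappaInv κ g) (conjS g)).im := by
  set c := min (κ.im / (1 + ‖κ‖)) (κ.re * κ.im / (2 * (1 + κ.im)))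
  refine ⟨c, by positivity, fun g hg => ?_⟩
  have hsum := summable_sq_norm_smul (norm_rootK_le_sobWt (κ := κ)) hg
  constructor
  · refine mul_tsum_le_map_pairS reCLM (by positivity) (sobWt_nonneg _) (fun n => ?_) hsum
    exact (mul_le_mul_of_nonneg_right (min_le_left _ _) (sobWt_nonneg _ n)).trans
      (mul_sobWt_half_le_rootK_re n h1 h2)
  · refine mul_tsum_le_map_pairS (-imCLM) (by positivity) (sobWt_nonneg _) (fun n => ?_) hsum
    exact (mul_le_mul_of_nonneg_right (min_le_right _ _) (sobWt_nonneg _ n)).trans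
      (mul_sobWt_neg_half_le_neg_rootK_im n h1 h2)
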